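/- If ¬a →* [x:b₁]b₂ in the reduction relation of system d, then there exist c₁, c₂ such that a →* [x!c₁]c₂ with c₁ →* b₁ and ¬c₂ →* b₂. -/

import Mathlib

/-- Expressions of the system d. -/
inductive Expr : Type
  | tau : Expr
  | var : ℕ → Expr
  | uabs : ℕ → Expr → Expr → Expr   -- [x:a]b
  | app : Expr → Expr → Expr        -- (a b)
  | eabs : ℕ → Expr → Expr → Expr   -- [x!a]b
  | pdef : ℕ → Expr → Expr → Expr → Expr -- [x ≐ a, b : c], binds x in c only
  | projL : Expr → Expr             -- a.1
  | projR : Expr → Expr             -- a.2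
  | prod : Expr → Expr → Expr       -- [a,b]
  | sum : Expr → Expr → Expr        -- [a+b]
  | injl : Expr → Expr → Expr       -- left injection
  | injr : Expr → Expr → Expr       -- right injection
  | case : Expr → Expr → Expr       -- [a|b]
  | neg : Expr → Expr               -- ¬a
deriving DecidableEq

namespace Expr

/-- Free variables. -/
def FV : Expr → Finset ℕ
  | tau => ∅
  | var x => {x}
  | uabs x a b => FV a ∪ (FV b \ {x})
  | app a b => FV a ∪ FV b
  | eabs x a b => FV a ∪ (FV b \ {x})
  | pdef x a b c => FV a ∪ FV b ∪ (FV c \ {x})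
  | projL a => FV a
  | projR a => FV a
  | prod a b => FV a ∪ FV b
  | sum a b => FV a ∪ FV b
  | injl a b => FV a ∪ FV b
  | injr a b => FV a ∪ FV b
  | case a b => FV a ∪ FV b
  | neg a => FV a

/-- Substitution of all free occurrences of a variable. -/
def subst : Expr → ℕ → Expr → Expr
  | tau, _, _ => tau
  | var y, x, b => if y = x then b else var y
  | uabs y a c, x, b =>
      if y = x then uabs y (subst a x b) c else uabs y (subst a x b) (subst c x b)
  | app a c, x, b => app (subst a x b) (subst c x b)
  | eabs y a c, x, b =>
      if y = x then eabs y (subst a x b) c else eabs y (subst a x b) (subst c x b)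
  | pdef y a c d, x, b =>
      if y = x then pdef y (subst a x b) (subst c x b) d
      else pdef y (subst a x b) (subst c x b) (subst d x b)
  | projL a, x, b => projL (subst a x b)
  | projR a, x, b => projR (subst a x b)
  | prod a c, x, b => prod (subst a x b) (subst c x b)
  | sum a c, x, b => sum (subst a x b) (subst c x b)
  | injl a c, x, b => injl (subst a x b) (subst c x b)
  | injr a c, x, b => injr (subst a x b) (subst c x b)
  | case a c, x, b => case (subst a x b) (subst c x b)
  | neg a, x, b => neg (subst a x b)

/-- Single-step reduction of system d. -/
inductive Step : Expr → Expr → Prop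
  | beta1 (x a b c) : Step (app (uabs x a b) c) (subst b x c)
  | beta2 (x a b c) : Step (app (eabs x a b) c) (subst b x c)
  | beta3 (a b c d) : Step (app (case a b) (injl c d)) (app a c)
  | beta4 (a b c d) : Step (app (case a b) (injr c d)) (app b d)
  | pi1 (x a b c) : Step (projL (pdef x a b c)) a
  | pi2 (x a b c) : Step (projR (pdef x a b c)) b
  | pi3 (a b) : Step (projL (prod a b)) a
  | pi4 (a b) : Step (projR (prod a b)) b
  | pi5 (a b) : Step (projL (sum a b)) a
  | pi6 (a b) : Step (projR (sum a b)) b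
  | nu1 (a) : Step (neg (neg a)) a
  | nu2 (a b) : Step (neg (prod a b)) (sum (neg a) (neg b))
  | nu3 (a b) : Step (neg (sum a b)) (prod (neg a) (neg b))
  | nu4 (x a b) : Step (neg (uabs x a b)) (eabs x a (neg b))
  | nu5 (x a b) : Step (neg (eabs x a b)) (uabs x a (neg b))
  | nu6 : Step (neg tau) tau
  | nu7 (x a b c) : Step (neg (pdef x a b c)) (pdef x a b c)
  | nu8 (a b) : Step (neg (injl a b)) (injl a b)
  | nu9 (a b) : Step (neg (injr a b)) (injr a b)
  | nu10 (a b) : Step (neg (case a b)) (case a b)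
  | uabsL {a b : Expr} (x) (c) : Step a b → Step (uabs x a c) (uabs x b c)
  | uabsR {a b : Expr} (x) (c) : Step a b → Step (uabs x c a) (uabs x c b)
  | appL {a b : Expr} (c) : Step a b → Step (app a c) (app b c)
  | appR {a b : Expr} (c) : Step a b → Step (app c a) (app c b)
  | eabsL {a b : Expr} (x) (c) : Step a b → Step (eabs x a c) (eabs x b c)
  | eabsR {a b : Expr} (x) (c) : Step a b → Step (eabs x c a) (eabs x c b)
  | pdef1 {a b : Expr} (x) (c d) : Step a b → Step (pdef x a c d) (pdef x b c d)
  | pdef2 {a b : Expr} (x) (c d) : Step a b → Step (pdef x c a d) (pdef x c b d)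
  | pdef3 {a b : Expr} (x) (c d) : Step a b → Step (pdef x c d a) (pdef x c d b)
  | projL1 {a b : Expr} : Step a b → Step (projL a) (projL b)
  | projR1 {a b : Expr} : Step a b → Step (projR a) (projR b)
  | prodL {a b : Expr} (c) : Step a b → Step (prod a c) (prod b c)
  | prodR {a b : Expr} (c) : Step a b → Step (prod c a) (prod c b)
  | sumL {a b : Expr} (c) : Step a b → Step (sum a c) (sum b c)
  | sumR {a b : Expr} (c) : Step a b → Step (sum c a) (sum c b)
  | injlL {a b : Expr} (c) : Step a b → Step (injl a c) (injl b c)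
  | injlR {a b : Expr} (c) : Step a b → Step (injl c a) (injl c b)
  | injrL {a b : Expr} (c) : Step a b → Step (injr a c) (injr b c)
  | injrR {a b : Expr} (c) : Step a b → Step (injr c a) (injr c b)
  | caseL {a b : Expr} (c) : Step a b → Step (case a c) (case b c)
  | caseR {a b : Expr} (c) : Step a b → Step (case c a) (case c b)
  | negC {a b : Expr} : Step a b → Step (neg a) (neg b)

/-- Reduction: reflexive-transitive closure of single-step reduction. -/
def Red : Expr → Expr → Prop := Relation.ReflTransGen Step

/-- Congruence =λ : the symmetric and transitive (and reflexive) closure of reduction. -/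
def Conv : Expr → Expr → Prop := Relation.EqvGen Step

/-- Single-step negation-reduction. -/
inductive NegStep : Expr → Expr → Prop
  | nu1 (a) : NegStep (neg (neg a)) a
  | nu2 (a b) : NegStep (neg (prod a b)) (sum (neg a) (neg b))
  | nu3 (a b) : NegStep (neg (sum a b)) (prod (neg a) (neg b))
  | nu4 (x a b) : NegStep (neg (uabs x a b)) (eabs x a (neg b))
  | nu5 (x a b) : NegStep (neg (eabs x a b)) (uabs x a (neg b))
  | prodL {a b : Expr} (c) : NegStep a b → NegStep (prod a c) (prod b c)
  | prodR {a b : Expr} (c) : NegStep a b → NegStep (prod c a) (prod c b)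
  | sumL {a b : Expr} (c) : NegStep a b → NegStep (sum a c) (sum b c)
  | sumR {a b : Expr} (c) : NegStep a b → NegStep (sum c a) (sum c b)
  | uabsBody {a b : Expr} (x) (c) : NegStep a b → NegStep (uabs x c a) (uabs x c b)
  | eabsBody {a b : Expr} (x) (c) : NegStep a b → NegStep (eabs x c a) (eabs x c b)
  | negC {a b : Expr} : NegStep a b → NegStep (neg a) (neg b)

/-- Negation-reduction: reflexive-transitive closure. -/
def NegRed : Expr → Expr → Prop := Relation.ReflTransGen NegStep

end Expr

open Expr

/-- Contexts: lists of declarations, most recent first. -/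
abbrev Ctx := List (ℕ × Expr)

/-- Domain of a context. -/
def Ctx.dom (Γ : Ctx) : List ℕ := Γ.map Prod.fst

/-- Substitution applied to all types declared in a context. -/
def Ctx.subst (Γ : Ctx) (x : ℕ) (b : Expr) : Ctx :=
  Γ.map (fun p => (p.1, Expr.subst p.2 x b))

/-- The typing relation of system d. -/
inductive Typing : Ctx → Expr → Expr → Prop
  | ax : Typing [] .tau .tau
  | start {Γ a b} (x) : Typing Γ a b → x ∉ Ctx.dom Γ →
      Typing ((x, a) :: Γ) (.var x) a
  | weak {Γ a b c d} (x) : Typing Γ a b → Typing Γ c d → x ∉ Ctx.dom Γ →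
      Typing ((x, c) :: Γ) a b
  | conv {Γ a b c d} : Typing Γ a b → Conv b c → Typing Γ c d → Typing Γ a c
  | absU {Γ a b c} (x) : Typing ((x, a) :: Γ) b c →
      Typing Γ (.uabs x a b) (.uabs x a c)
  | absE {Γ a b c} (x) : Typing ((x, a) :: Γ) b c →
      Typing Γ (.eabs x a b) (.uabs x a c)
  | appl {Γ a b c d} (x) : Typing Γ a (.uabs x b c) → Typing Γ d b →
      Typing Γ (.app a d) (Expr.subst c x d)
  | pdef {Γ a b c d e} (x) : Typing Γ a b → Typing Γ c (Expr.subst d x a) →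
      Typing ((x, b) :: Γ) d e → Typing Γ (.pdef x a c d) (.eabs x b d)
  | chI {Γ a b c} (x) : Typing Γ a (.eabs x b c) → Typing Γ (.projL a) b
  | chB {Γ a b c} (x) : Typing Γ a (.eabs x b c) →
      Typing Γ (.projR a) (Expr.subst c x (.projL a))
  | prd {Γ a b c d} : Typing Γ a c → Typing Γ b d →
      Typing Γ (.prod a b) (.prod c d)
  | sum {Γ a b c d} : Typing Γ a c → Typing Γ b d →
      Typing Γ (.sum a b) (.prod c d)
  | prL {Γ a b c} : Typing Γ a (.prod b c) → Typing Γ (.projL a) b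
  | prR {Γ a b c} : Typing Γ a (.prod b c) → Typing Γ (.projR a) c
  | injL {Γ a b c d} : Typing Γ a b → Typing Γ c d →
      Typing Γ (.injl a c) (.sum b c)
  | injR {Γ a b c d} : Typing Γ a b → Typing Γ c d →
      Typing Γ (.injr c a) (.sum c b)
  | case {Γ a b c₁ c₂ d e} (x y z) : Typing Γ a (.uabs x c₁ d) →
      Typing Γ b (.uabs y c₂ d) → Typing Γ d e → z ∉ FV d →
      Typing Γ (.case a b) (.uabs z (.sum c₁ c₂) d)
  | neg {Γ a b} : Typing Γ a b → Typing Γ (.neg a) b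

/-- Validity: an expression is valid under a context iff it has a type. -/
def Valid (Γ : Ctx) (a : Expr) : Prop := ∃ b, Typing Γ a b

/-- The norming relation: `Norming Γ a n` holds iff the partial norming function
ν_Γ(a) is defined with value the norm `n` (norms are built from τ and products). -/
inductive Norming : Ctx → Expr → Expr → Prop
  | tau (Γ) : Norming Γ .tau .tau
  | varHead {Γ b n} (x) : Norming Γ b n → Norming ((x, b) :: Γ) (.var x) n
  | varTail {Γ b n} (x y) : x ≠ y → Norming Γ (.var x) n →
      Norming ((y, b) :: Γ) (.var x) n
  | uabs {Γ a b na nb} (x) : Norming Γ a na → Norming ((x, a) :: Γ) b nb →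
      Norming Γ (.uabs x a b) (.prod na nb)
  | eabs {Γ a b na nb} (x) : Norming Γ a na → Norming ((x, a) :: Γ) b nb →
      Norming Γ (.eabs x a b) (.prod na nb)
  | app {Γ a b nb nc} : Norming Γ a (.prod nb nc) → Norming Γ b nb →
      Norming Γ (.app a b) nc
  | pdef {Γ a b c na nb} (x) : Norming Γ a na → Norming Γ b nb →
      Norming ((x, a) :: Γ) c nb → Norming Γ (.pdef x a b c) (.prod na nb)
  | prod {Γ a b na nb} : Norming Γ a na → Norming Γ b nb →
      Norming Γ (.prod a b) (.prod na nb)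
  | sum {Γ a b na nb} : Norming Γ a na → Norming Γ b nb →
      Norming Γ (.sum a b) (.prod na nb)
  | injl {Γ a b na nb} : Norming Γ a na → Norming Γ b nb →
      Norming Γ (.injl a b) (.prod na nb)
  | injr {Γ a b na nb} : Norming Γ a na → Norming Γ b nb →
      Norming Γ (.injr a b) (.prod na nb)
  | projL {Γ a na nb} : Norming Γ a (.prod na nb) → Norming Γ (.projL a) na
  | projR {Γ a na nb} : Norming Γ a (.prod na nb) → Norming Γ (.projR a) nb
  | case {Γ a b na nb nc} : Norming Γ a (.prod na nc) → Norming Γ b (.prod nb nc) →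
      Norming Γ (.case a b) (.prod (.prod na nb) nc)
  | neg {Γ a n} : Norming Γ a n → Norming Γ (.neg a) n

/-- Normability: ν_Γ(a) is defined. -/
def Normable (Γ : Ctx) (a : Expr) : Prop := ∃ n, Norming Γ a n

/-!
Follow the reduction of `¬a`. Steps inside `a` are steps of `a` itself. The first root step is a
negation rule; every such rule except `¬¬c → c` and `¬[x!c₁]c₂ → [x:c₁]¬c₂` produces a rigid
head, which reduction never changes, so it can no longer reach `[x:b₁]b₂`. In the `¬¬` case,
`a = ¬c →* ¬[x:b₁]b₂ → [x!b₁]¬b₂`.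
-/

namespace Expr

/-- Heads that no rule of system d can rewrite at the root. -/
def HasRigidHead : Expr → Prop
  | app _ _ | projL _ | projR _ | neg _ => False
  | _ => True

theorem Step.hasRigidHead {a b : Expr} (h : Step a b) (ha : a.HasRigidHead) :
    b.HasRigidHead := by
  cases h <;> trivial

theorem Step.ctorIdx_eq {a b : Expr} (h : Step a b) (ha : a.HasRigidHead) :
    b.ctorIdx = a.ctorIdx := by
  cases h <;> first | rfl | exact ha.elim

theorem Red.ctorIdx_eq {a b : Expr} (h : Red a b) (ha : a.HasRigidHead) :
    b.ctorIdx = a.ctorIdx := by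
  induction h using Relation.ReflTransGen.head_induction_on with
  | refl => rfl
  | head hstep _ ih => exact (ih (hstep.hasRigidHead ha)).trans (hstep.ctorIdx_eq ha)

theorem Red.neg {a b : Expr} (h : Red a b) : Red (neg a) (neg b) :=
  Relation.ReflTransGen.lift Expr.neg (fun _ _ => Step.negC) _ _ h

theorem Red.exists_eq_uabs {x : ℕ} {a b e : Expr} (h : Red (uabs x a b) e) :
    ∃ a' b', e = uabs x a' b' ∧ Red a a' ∧ Red b b' := by
  induction h with
  | refl => exact ⟨a, b, rfl, .refl, .refl⟩
  | tail _ hstep ih =>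
    obtain ⟨a', b', rfl, ha, hb⟩ := ih
    cases hstep with
    | uabsL _ _ h => exact ⟨_, _, rfl, ha.tail h, hb⟩
    | uabsR _ _ h => exact ⟨_, _, rfl, ha, hb.tail h⟩

end Expr

theorem stmt_6 (a b₁ b₂ : Expr) (x : ℕ)
    (h : Expr.Red (Expr.neg a) (Expr.uabs x b₁ b₂)) :
    ∃ c₁ c₂, Expr.Red a (Expr.eabs x c₁ c₂) ∧ Expr.Red c₁ b₁ ∧
      Expr.Red (Expr.neg c₂) b₂ := by
  generalize hs : Expr.neg a = s at h
  induction h using Relation.ReflTransGen.head_induction_on generalizing a with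
  | refl => cases hs
  | head hstep hred ih =>
    subst hs
    cases hstep with
    | negC hstep =>
      obtain ⟨c₁, c₂, ha, hc₁, hc₂⟩ := ih _ rfl
      exact ⟨c₁, c₂, ha.head hstep, hc₁, hc₂⟩
    | nu1 =>
      exact ⟨b₁, .neg b₂, (Expr.Red.neg hred).tail (.nu4 x b₁ b₂), .refl, .single (.nu1 b₂)⟩
    | nu5 =>
      obtain ⟨_, _, he, hc₁, hc₂⟩ := Expr.Red.exists_eq_uabs hred
      cases he
      exact ⟨_, _, .refl, hc₁, hc₂⟩
    | _ => exact absurd (Expr.Red.ctorIdx_eq hred trivial) (by simp [Expr.ctorIdx])
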